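/- arXiv:math/9805064 — 2 statements merged into one kernel-verified Lean document; each statement's English description precedes it below -/
import Mathlib

section
/- Let H₁ and H₂ be two ν-dimensional subspaces of D that are orthogonal to each other, and suppose there is a constant C such that Q^A(φ) ≤ C for every nonzero φ ∈ H₁ and for every nonzero φ ∈ H₂. Then for every j with 1 ≤ j ≤ ν one has (λ_j + λ_{2ν−j+1})/2 ≤ C. -/
open scoped InnerProductSpace

lemma conj_mul_self_eq (z : ℂ) : (starRingEnd ℂ) z * z = ((‖z‖ ^ 2 : ℝ) : ℂ) := by
  rw [mul_comm, Complex.mul_conj]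
  norm_cast
  exact (Complex.sq_norm z).symm

lemma spec_bound {L : Type*} [NormedAddCommGroup L] [InnerProductSpace ℂ L] [CompleteSpace L]
    (b : HilbertBasis ℕ ℂ L) (lam : ℕ → ℝ)
    (hmono : ∀ k l, 1 ≤ k → k ≤ l → lam k ≤ lam l)
    (D : Submodule ℂ L) (A : D →ₗ[ℂ] L)
    (hAb : ∀ (i : ℕ) (v : D), ⟪A v, b i⟫_ℂ = (lam (i + 1) : ℂ) * ⟪(v : L), b i⟫_ℂ)
    (m : ℕ) (v : L) (hv : v ∈ D)
    (hlow : ∀ i : ℕ, i + 1 ≤ m → ⟪b i, v⟫_ℂ = 0) :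
    lam (m + 1) * ‖v‖ ^ 2 ≤ (⟪A ⟨v, hv⟩, v⟫_ℂ).re := by
  have hcc : ∀ i, ⟪v, b i⟫_ℂ * ⟪b i, v⟫_ℂ = ((‖⟪b i, v⟫_ℂ‖ ^ 2 : ℝ) : ℂ) := by
    intro i
    rw [← inner_conj_symm v (b i)]
    exact conj_mul_self_eq _
  have hterm : ∀ i, ⟪A ⟨v, hv⟩, b i⟫_ℂ * ⟪b i, v⟫_ℂ
      = ((lam (i + 1) * ‖⟪b i, v⟫_ℂ‖ ^ 2 : ℝ) : ℂ) := by
    intro i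
    rw [hAb i ⟨v, hv⟩, mul_assoc]
    simp only [Submodule.coe_mk]
    rw [hcc i]
    push_cast
    ring
  have hsum1 : Summable fun i => ⟪A ⟨v, hv⟩, b i⟫_ℂ * ⟪b i, v⟫_ℂ :=
    b.summable_inner_mul_inner _ v
  have hsum1' : Summable fun i => lam (i + 1) * ‖⟪b i, v⟫_ℂ‖ ^ 2 := by
    have h := hsum1.map Complex.reAddGroupHom Complex.continuous_re
    refine h.congr fun i => ?_
    simp only [Function.comp_apply, Complex.reAddGroupHom, AddMonoidHom.coe_mk, ZeroHom.coe_mk, hterm i, Complex.ofReal_re]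
  have hsumv : Summable fun i => ⟪v, b i⟫_ℂ * ⟪b i, v⟫_ℂ :=
    b.summable_inner_mul_inner v v
  have hsq : Summable fun i => ‖⟪b i, v⟫_ℂ‖ ^ 2 := by
    have h := hsumv.map Complex.reAddGroupHom Complex.continuous_re
    refine h.congr fun i => ?_
    simp only [Function.comp_apply, Complex.reAddGroupHom, AddMonoidHom.coe_mk, ZeroHom.coe_mk, hcc i, Complex.ofReal_re]
  have hpars : ‖v‖ ^ 2 = ∑' i, ‖⟪b i, v⟫_ℂ‖ ^ 2 := by
    have h1 := b.tsum_inner_mul_inner v v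
    have h2 : (∑' i, ⟪v, b i⟫_ℂ * ⟪b i, v⟫_ℂ).re = ∑' i, ‖⟪b i, v⟫_ℂ‖ ^ 2 := by
      rw [Complex.re_tsum hsumv]
      congr 1 with i
      rw [hcc i, Complex.ofReal_re]
    rw [h1] at h2
    rw [← h2, @inner_self_eq_norm_sq_to_K ℂ]
    norm_cast
  have hre : (⟪A ⟨v, hv⟩, v⟫_ℂ).re = ∑' i, lam (i + 1) * ‖⟪b i, v⟫_ℂ‖ ^ 2 := by
    rw [← b.tsum_inner_mul_inner (A ⟨v, hv⟩) v, Complex.re_tsum hsum1]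
    congr 1 with i
    rw [hterm i, Complex.ofReal_re]
  rw [hre, hpars, ← tsum_mul_left]
  refine Summable.tsum_le_tsum (fun i => ?_) (hsq.mul_left _) hsum1'
  by_cases hi : i + 1 ≤ m
  · simp [hlow i hi]
  · exact mul_le_mul_of_nonneg_right (hmono (m + 1) (i + 1) (by omega) (by omega)) (by positivity)

/-- Lemma 5.1 of the paper: the sharpened variational characterization of
eigenvalues.  `𝓛` is a separable complex Hilbert space with Hilbert basis
`(φ_k)_{k ≥ 1}`, `A : D → 𝓛` is a symmetric linear operator with
`A φ_k = λ_k φ_k` where `0 ≤ λ_1 ≤ λ_2 ≤ …`.  If the Rayleigh quotient of `A`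
is bounded by `C` on two ν-dimensional mutually orthogonal subspaces
`H₁, H₂ ⊆ D`, then `(λ_j + λ_{2ν−j+1})/2 ≤ C` for all `1 ≤ j ≤ ν`. -/
theorem sharpened_variational_characterization
    {L : Type*} [NormedAddCommGroup L] [InnerProductSpace ℂ L] [CompleteSpace L]
    (φ : ℕ → L)
    (horth : Orthonormal ℂ (fun k : ℕ => φ (k + 1)))
    (hspan : (Submodule.span ℂ (Set.range fun k : ℕ => φ (k + 1))).topologicalClosure = ⊤)
    (lam : ℕ → ℝ)
    (hlam_nonneg : ∀ k, 1 ≤ k → 0 ≤ lam k)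
    (hlam_mono : ∀ k l, 1 ≤ k → k ≤ l → lam k ≤ lam l)
    (D : Submodule ℂ L) (hφD : ∀ k, 1 ≤ k → φ k ∈ D)
    (A : D →ₗ[ℂ] L)
    (hsym : ∀ x y : D, ⟪A x, (y : L)⟫_ℂ = ⟪(x : L), A y⟫_ℂ)
    (heig : ∀ k (hk : 1 ≤ k), A ⟨φ k, hφD k hk⟩ = (lam k : ℂ) • φ k)
    (ν : ℕ) (C : ℝ)
    (H₁ H₂ : Submodule ℂ L)
    (hH₁D : H₁ ≤ D) (hH₂D : H₂ ≤ D)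
    (hfin₁ : FiniteDimensional ℂ H₁) (hfin₂ : FiniteDimensional ℂ H₂)
    (hdim₁ : Module.finrank ℂ H₁ = ν) (hdim₂ : Module.finrank ℂ H₂ = ν)
    (horth₁₂ : ∀ x ∈ H₁, ∀ y ∈ H₂, ⟪x, y⟫_ℂ = 0)
    (hray₁ : ∀ x (hx : x ∈ H₁), x ≠ 0 →
      (⟪A ⟨x, hH₁D hx⟩, x⟫_ℂ).re / ‖x‖ ^ 2 ≤ C)
    (hray₂ : ∀ x (hx : x ∈ H₂), x ≠ 0 →
      (⟪A ⟨x, hH₂D hx⟩, x⟫_ℂ).re / ‖x‖ ^ 2 ≤ C) :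
    ∀ j, 1 ≤ j → j ≤ ν → (lam j + lam (2 * ν - j + 1)) / 2 ≤ C := by
  intro j hj1 hjν
  haveI := hfin₁; haveI := hfin₂
  -- the Hilbert basis
  let b : HilbertBasis ℕ ℂ L := HilbertBasis.mk horth (le_of_eq hspan.symm)
  have hb : ∀ i, b i = φ (i + 1) := fun i => by
    exact congrFun (HilbertBasis.coe_mk horth (le_of_eq hspan.symm)) i
  have hAb : ∀ (i : ℕ) (v : D), ⟪A v, b i⟫_ℂ = (lam (i + 1) : ℂ) * ⟪(v : L), b i⟫_ℂ := by
    intro i v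
    rw [hb i]
    have h1 : ⟪A v, ((⟨φ (i + 1), hφD (i + 1) (by omega)⟩ : D) : L)⟫_ℂ
        = ⟪(v : L), A ⟨φ (i + 1), hφD (i + 1) (by omega)⟩⟫_ℂ := hsym v _
    simp only [Submodule.coe_mk] at h1
    rw [h1, heig (i + 1) (by omega), inner_smul_right]
  -- set up the constraint map
  set m₁ := 2 * ν - j with hm₁
  set m₂ := j - 1 with hm₂
  let addm : H₁ × H₂ →ₗ[ℂ] L := H₁.subtype.coprod H₂.subtype
  let subm : H₁ × H₂ →ₗ[ℂ] L := H₁.subtype.coprod (-H₂.subtype)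
  let T : H₁ × H₂ →ₗ[ℂ] (Fin m₁ → ℂ) × (Fin m₂ → ℂ) :=
    (LinearMap.pi fun k : Fin m₁ =>
      ((innerSL ℂ (φ (k.1 + 1))).toLinearMap.comp addm)).prod
    (LinearMap.pi fun k : Fin m₂ =>
      ((innerSL ℂ (φ (k.1 + 1))).toLinearMap.comp subm))
  have hrank : Module.finrank ℂ ((Fin m₁ → ℂ) × (Fin m₂ → ℂ))
      < Module.finrank ℂ (H₁ × H₂) := by
    rw [Module.finrank_prod, Module.finrank_prod, Module.finrank_fin_fun,
      Module.finrank_fin_fun, hdim₁, hdim₂]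
    omega
  have hker : LinearMap.ker T ≠ ⊥ := by
    intro h
    have hinj : Function.Injective T := LinearMap.ker_eq_bot.mp h
    exact absurd (LinearMap.finrank_le_finrank_of_injective hinj) (not_le.mpr hrank)
  obtain ⟨p, hpker, hpne⟩ := (Submodule.ne_bot_iff _).mp hker
  set x : L := (p.1 : L) with hxdef
  set y : L := (p.2 : L) with hydef
  have hx : x ∈ H₁ := p.1.2
  have hy : y ∈ H₂ := p.2.2
  have hpker' : T p = 0 := hpker
  have hw_low : ∀ i : ℕ, i + 1 ≤ m₁ → ⟪φ (i + 1), x + y⟫_ℂ = 0 := by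
    intro i hi
    have h := congrFun (congrArg Prod.fst hpker') ⟨i, by omega⟩
    simpa [T, addm, LinearMap.prod_apply, LinearMap.pi_apply, LinearMap.coprod_apply,
      innerSL_apply_apply, inner_add_right, hxdef, hydef] using h
  have hu_low : ∀ i : ℕ, i + 1 ≤ m₂ → ⟪φ (i + 1), x - y⟫_ℂ = 0 := by
    intro i hi
    have h := congrFun (congrArg Prod.snd hpker') ⟨i, by omega⟩
    simpa [T, subm, LinearMap.prod_apply, LinearMap.pi_apply, LinearMap.coprod_apply,
      innerSL_apply_apply, inner_add_right, inner_neg_right, sub_eq_add_neg, hxdef, hydef] using h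
  -- orthogonality and norms
  have hxy : ⟪x, y⟫_ℂ = 0 := horth₁₂ x hx y hy
  have hnw : ‖x + y‖ ^ 2 = ‖x‖ ^ 2 + ‖y‖ ^ 2 := by
    rw [@norm_add_sq ℂ]
    simp [hxy]
  have hnu : ‖x - y‖ ^ 2 = ‖x‖ ^ 2 + ‖y‖ ^ 2 := by
    rw [@norm_sub_sq ℂ]
    simp [hxy]
  have hS : 0 < ‖x‖ ^ 2 + ‖y‖ ^ 2 := by
    have hxor : p.1 ≠ 0 ∨ p.2 ≠ 0 := by
      by_contra hcon
      push_neg at hcon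
      exact hpne (Prod.ext hcon.1 hcon.2)
    have h1 : x ≠ 0 ∨ y ≠ 0 := by
      rcases hxor with h | h
      · exact Or.inl fun h0 => h (Subtype.ext h0)
      · exact Or.inr fun h0 => h (Subtype.ext h0)
    rcases h1 with h | h
    · have hp : 0 < ‖x‖ ^ 2 := pow_pos (norm_pos_iff.mpr h) 2
      nlinarith [sq_nonneg ‖y‖]
    · have hp : 0 < ‖y‖ ^ 2 := pow_pos (norm_pos_iff.mpr h) 2
      nlinarith [sq_nonneg ‖x‖]
  -- Rayleigh bounds
  have hqx : (⟪A ⟨x, hH₁D hx⟩, x⟫_ℂ).re ≤ C * ‖x‖ ^ 2 := by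
    by_cases h0 : x = 0
    · have : (⟨x, hH₁D hx⟩ : D) = 0 := Subtype.ext h0
      rw [this, map_zero]
      simp [h0]
    · have h := hray₁ x hx h0
      have hpos : (0:ℝ) < ‖x‖ ^ 2 := pow_pos (norm_pos_iff.mpr h0) 2
      rw [div_le_iff₀ hpos] at h
      linarith [h]
  have hqy : (⟪A ⟨y, hH₂D hy⟩, y⟫_ℂ).re ≤ C * ‖y‖ ^ 2 := by
    by_cases h0 : y = 0
    · have : (⟨y, hH₂D hy⟩ : D) = 0 := Subtype.ext h0
      rw [this, map_zero]
      simp [h0]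
    · have h := hray₂ y hy h0
      have hpos : (0:ℝ) < ‖y‖ ^ 2 := pow_pos (norm_pos_iff.mpr h0) 2
      rw [div_le_iff₀ hpos] at h
      linarith [h]
  -- spectral bounds
  have hwD : x + y ∈ D := D.add_mem (hH₁D hx) (hH₂D hy)
  have huD : x - y ∈ D := D.sub_mem (hH₁D hx) (hH₂D hy)
  have hspec₁ : lam (m₁ + 1) * ‖x + y‖ ^ 2 ≤ (⟪A ⟨x + y, hwD⟩, x + y⟫_ℂ).re :=
    spec_bound b lam hlam_mono D A hAb m₁ (x + y) hwD
      (fun i hi => by rw [hb i]; exact hw_low i hi)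
  have hspec₂ : lam (m₂ + 1) * ‖x - y‖ ^ 2 ≤ (⟪A ⟨x - y, huD⟩, x - y⟫_ℂ).re :=
    spec_bound b lam hlam_mono D A hAb m₂ (x - y) huD
      (fun i hi => by rw [hb i]; exact hu_low i hi)
  -- expansion of the quadratic form
  have hAw : A ⟨x + y, hwD⟩ = A ⟨x, hH₁D hx⟩ + A ⟨y, hH₂D hy⟩ := by
    rw [show (⟨x + y, hwD⟩ : D) = ⟨x, hH₁D hx⟩ + ⟨y, hH₂D hy⟩ from rfl, map_add]
  have hAu : A ⟨x - y, huD⟩ = A ⟨x, hH₁D hx⟩ - A ⟨y, hH₂D hy⟩ := by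
    rw [show (⟨x - y, huD⟩ : D) = ⟨x, hH₁D hx⟩ - ⟨y, hH₂D hy⟩ from rfl, map_sub]
  have hexp : ⟪A ⟨x + y, hwD⟩, x + y⟫_ℂ + ⟪A ⟨x - y, huD⟩, x - y⟫_ℂ
      = 2 * (⟪A ⟨x, hH₁D hx⟩, x⟫_ℂ + ⟪A ⟨y, hH₂D hy⟩, y⟫_ℂ) := by
    rw [hAw, hAu]
    simp only [inner_add_left, inner_add_right, inner_sub_left, inner_sub_right]
    ring
  have hexp_re : (⟪A ⟨x + y, hwD⟩, x + y⟫_ℂ).re + (⟪A ⟨x - y, huD⟩, x - y⟫_ℂ).re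
      = 2 * ((⟪A ⟨x, hH₁D hx⟩, x⟫_ℂ).re + (⟪A ⟨y, hH₂D hy⟩, y⟫_ℂ).re) := by
    have := congrArg Complex.re hexp
    simpa using this
  -- put it together
  have hm₂1 : m₂ + 1 = j := by omega
  rw [hnw] at hspec₁
  rw [hnu, hm₂1] at hspec₂
  have hfinal : (lam j + lam (m₁ + 1)) * (‖x‖ ^ 2 + ‖y‖ ^ 2)
      ≤ 2 * C * (‖x‖ ^ 2 + ‖y‖ ^ 2) := by nlinarith
  have h2C : lam j + lam (m₁ + 1) ≤ 2 * C :=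
    le_of_mul_le_mul_right (by linarith [hfinal]) hS
  rw [hm₁] at h2C
  linarith
end

section
/- Let A be an N×N positive semidefinite Hermitian complex matrix with eigenvalues λ₁ ≤ λ₂ ≤ … ≤ λ_N listed with multiplicity. Let ν ≥ 1 with 2ν ≤ N, and let H₁ and H₂ be two ν-dimensional subspaces of ℂ^N, orthogonal to each other, such that ⟨Aφ,φ⟩ ≤ C·‖φ‖² for all φ ∈ H₁ and all φ ∈ H₂. Then for every j with 1 ≤ j ≤ ν one has (λ_j + λ_{2ν−j+1})/2 ≤ C. -/
open scoped InnerProductSpace ComplexOrder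

set_option maxHeartbeats 1000000

/-- Finite-dimensional instance of Lemma 5.1 of the paper: `A` is an `N × N`
positive semidefinite Hermitian matrix with eigenvalues
`λ₁ ≤ λ₂ ≤ … ≤ λ_N` (listed with multiplicity, encoded by a monotone family
`lam` together with an orthonormal eigenbasis `v`).  If `⟨Aφ, φ⟩ ≤ C ‖φ‖²`
on two mutually orthogonal ν-dimensional subspaces `H₁, H₂` of `ℂ^N`
(with `2ν ≤ N`), then `(λ_j + λ_{2ν−j+1})/2 ≤ C` for `1 ≤ j ≤ ν`
(written below with the 0-based index `i = j − 1`). -/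
theorem finite_dimensional_variational_characterization
    {N : ℕ} (A : Matrix (Fin N) (Fin N) ℂ)
    (hherm : A.IsHermitian) (hpos : A.PosSemidef)
    (lam : Fin N → ℝ) (hmono : Monotone lam)
    (v : Fin N → EuclideanSpace ℂ (Fin N))
    (hv : Orthonormal ℂ v)
    (heig : ∀ i, Matrix.toEuclideanLin A (v i) = (lam i : ℂ) • v i)
    (ν : ℕ) (hν : 1 ≤ ν) (hνN : 2 * ν ≤ N)
    (C : ℝ)
    (H₁ H₂ : Submodule ℂ (EuclideanSpace ℂ (Fin N)))
    (hdim₁ : Module.finrank ℂ H₁ = ν) (hdim₂ : Module.finrank ℂ H₂ = ν)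
    (horth₁₂ : ∀ x ∈ H₁, ∀ y ∈ H₂, ⟪x, y⟫_ℂ = 0)
    (hray₁ : ∀ x ∈ H₁, (⟪Matrix.toEuclideanLin A x, x⟫_ℂ).re ≤ C * ‖x‖ ^ 2)
    (hray₂ : ∀ x ∈ H₂, (⟪Matrix.toEuclideanLin A x, x⟫_ℂ).re ≤ C * ‖x‖ ^ 2) :
    ∀ i : ℕ, ∀ hi : i < ν,
      (lam ⟨i, by omega⟩ + lam ⟨2 * ν - i - 1, by omega⟩) / 2 ≤ C := by
  intro i hi
  classical
  have hE : True := trivial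
  set T := Matrix.toEuclideanLin A with hT
  have hsym : LinearMap.IsSymmetric T := Matrix.isHermitian_iff_isSymmetric.1 hherm
  haveI : Nonempty (Fin N) := ⟨⟨0, by omega⟩⟩
  -- orthonormal basis
  have hspan : ⊤ ≤ Submodule.span ℂ (Set.range v) :=
    (hv.linearIndependent.span_eq_top_of_card_eq_finrank
      (by simp [finrank_euclideanSpace])).ge
  set b : OrthonormalBasis (Fin N) ℂ (EuclideanSpace ℂ (Fin N)) := OrthonormalBasis.mk hv hspan with hb
  have hbv : ∀ k, b k = v k := fun k => by rw [hb, OrthonormalBasis.coe_mk]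
  -- key Rayleigh lower bound
  have key : ∀ (m : ℕ) (hm : m < N) (ψ : EuclideanSpace ℂ (Fin N)),
      (∀ k : Fin N, (k : ℕ) < m → ⟪v k, ψ⟫_ℂ = 0) →
      lam ⟨m, hm⟩ * ‖ψ‖ ^ 2 ≤ (⟪T ψ, ψ⟫_ℂ).re := by
    intro m hm ψ hψ
    have hterm : ∀ k : Fin N, ⟪T ψ, b k⟫_ℂ * ⟪b k, ψ⟫_ℂ
        = (lam k : ℂ) * ((starRingEnd ℂ) ⟪v k, ψ⟫_ℂ * ⟪v k, ψ⟫_ℂ) := by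
      intro k
      rw [hbv, hsym ψ (v k), heig, inner_smul_right, inner_conj_symm]
      push_cast
      ring
    have hre : (⟪T ψ, ψ⟫_ℂ).re = ∑ k, lam k * ‖⟪v k, ψ⟫_ℂ‖ ^ 2 := by
      rw [← b.sum_inner_mul_inner (T ψ) ψ]
      rw [Complex.re_sum]
      refine Finset.sum_congr rfl fun k _ => ?_
      rw [hterm k, Complex.conj_mul']
      have : ((lam k : ℂ) * ((‖⟪v k, ψ⟫_ℂ‖ : ℝ) : ℂ) ^ 2)
          = (((lam k * ‖⟪v k, ψ⟫_ℂ‖ ^ 2 : ℝ)) : ℂ) := by push_cast; ring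
      rw [this, Complex.ofReal_re]
    have hnorm : ‖ψ‖ ^ 2 = ∑ k, ‖⟪v k, ψ⟫_ℂ‖ ^ 2 := by
      have h := b.sum_inner_mul_inner ψ ψ
      have h2 : (⟪ψ, ψ⟫_ℂ).re = ∑ k, ‖⟪v k, ψ⟫_ℂ‖ ^ 2 := by
        rw [← h, Complex.re_sum]
        refine Finset.sum_congr rfl fun k _ => ?_
        rw [hbv, ← inner_conj_symm ψ (v k)]
        rw [Complex.conj_mul']
        simp [← Complex.ofReal_pow]
      rw [← h2, ← Complex.ofReal_re (‖ψ‖ ^ 2)]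
      congr 1
      exact_mod_cast (inner_self_eq_norm_sq_to_K (𝕜 := ℂ) ψ).symm
    rw [hre, hnorm, Finset.mul_sum]
    refine Finset.sum_le_sum fun k _ => ?_
    by_cases hk : (k : ℕ) < m
    · simp [hψ k hk]
    · have : lam ⟨m, hm⟩ ≤ lam k := hmono (by simp [Fin.le_def]; omega)
      nlinarith [sq_nonneg ‖⟪v k, ψ⟫_ℂ‖]
  -- dimension count: find φ₁ ∈ H₁, φ₂ ∈ H₂
  set m₂ := 2 * ν - i - 1 with hm₂
  have hm₂N : m₂ < N := by omega
  have hiN : i < N := by omega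
  let F : (H₁ × H₂) →ₗ[ℂ] (Fin m₂ → ℂ) × (Fin i → ℂ) :=
    { toFun := fun p =>
        (fun k => ⟪v ⟨k, by omega⟩, (p.1 : EuclideanSpace ℂ (Fin N)) + (p.2 : EuclideanSpace ℂ (Fin N))⟫_ℂ,
         fun k => ⟪v ⟨k, by omega⟩, (p.1 : EuclideanSpace ℂ (Fin N)) - (p.2 : EuclideanSpace ℂ (Fin N))⟫_ℂ)
      map_add' := by
        intro p q
        ext k <;>
          simp [inner_add_right, inner_sub_right] <;> ring
      map_smul' := by
        intro c p
        ext k <;>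
          simp [inner_add_right, inner_sub_right, inner_smul_right, smul_add, smul_sub] <;>
          ring }
  have hker : LinearMap.ker F ≠ ⊥ := by
    intro hkerbot
    have hinj : Function.Injective F := LinearMap.ker_eq_bot.1 hkerbot
    have hle := LinearMap.finrank_le_finrank_of_injective hinj
    rw [Module.finrank_prod, Module.finrank_prod, hdim₁, hdim₂] at hle
    simp [Module.finrank_pi] at hle
    omega
  obtain ⟨p, hpmem, hpne⟩ := Submodule.exists_mem_ne_zero_of_ne_bot hker
  set φ₁ : EuclideanSpace ℂ (Fin N) := (p.1 : EuclideanSpace ℂ (Fin N)) with hφ₁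
  set φ₂ : EuclideanSpace ℂ (Fin N) := (p.2 : EuclideanSpace ℂ (Fin N)) with hφ₂
  have hFp : F p = 0 := hpmem
  have hc₁ : ∀ k : Fin N, (k : ℕ) < m₂ → ⟪v k, φ₁ + φ₂⟫_ℂ = 0 := by
    intro k hk
    have := congrFun (congrArg Prod.fst hFp) ⟨k, hk⟩
    simpa [F] using this
  have hc₂ : ∀ k : Fin N, (k : ℕ) < i → ⟪v k, φ₁ - φ₂⟫_ℂ = 0 := by
    intro k hk
    have := congrFun (congrArg Prod.snd hFp) ⟨k, hk⟩
    simpa [F] using this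
  have hperp : ⟪φ₁, φ₂⟫_ℂ = 0 := horth₁₂ _ p.1.2 _ p.2.2
  have hre0 : (⟪φ₁, φ₂⟫_ℂ).re = 0 := by rw [hperp]; simp
  have hadd : ‖φ₁ + φ₂‖ ^ 2 = ‖φ₁‖ ^ 2 + ‖φ₂‖ ^ 2 := by
    rw [@norm_add_sq ℂ]; simp [hperp]
  have hsub : ‖φ₁ - φ₂‖ ^ 2 = ‖φ₁‖ ^ 2 + ‖φ₂‖ ^ 2 := by
    rw [@norm_sub_sq ℂ]; simp [hperp]
  have hφne : ‖φ₁ + φ₂‖ ^ 2 ≠ 0 := by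
    intro h0
    rw [hadd] at h0
    have h1 : φ₁ = 0 := by
      have := norm_eq_zero.1 (by nlinarith [sq_nonneg ‖φ₁‖, sq_nonneg ‖φ₂‖, norm_nonneg φ₁, norm_nonneg φ₂] : ‖φ₁‖ = 0)
      exact this
    have h2 : φ₂ = 0 := by
      have := norm_eq_zero.1 (by nlinarith [norm_nonneg φ₁, norm_nonneg φ₂] : ‖φ₂‖ = 0)
      exact this
    apply hpne
    have : p.1 = 0 := Subtype.ext h1
    have h2' : p.2 = 0 := Subtype.ext h2
    exact Prod.ext this h2'
  have hφpos : 0 < ‖φ₁ + φ₂‖ ^ 2 := lt_of_le_of_ne (sq_nonneg _) (Ne.symm hφne)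
  -- quadratic form identity
  have hqsum : (⟪T (φ₁ + φ₂), φ₁ + φ₂⟫_ℂ).re + (⟪T (φ₁ - φ₂), φ₁ - φ₂⟫_ℂ).re
      = 2 * ((⟪T φ₁, φ₁⟫_ℂ).re + (⟪T φ₂, φ₂⟫_ℂ).re) := by
    have : ⟪T (φ₁ + φ₂), φ₁ + φ₂⟫_ℂ + ⟪T (φ₁ - φ₂), φ₁ - φ₂⟫_ℂ
        = 2 * ⟪T φ₁, φ₁⟫_ℂ + 2 * ⟪T φ₂, φ₂⟫_ℂ := by
      simp only [map_add, map_sub, inner_add_left, inner_add_right,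
        inner_sub_left, inner_sub_right]
      ring
    have hre := congrArg Complex.re this
    simp at hre ⊢
    linarith
  have hray : (⟪T φ₁, φ₁⟫_ℂ).re + (⟪T φ₂, φ₂⟫_ℂ).re
      ≤ C * (‖φ₁‖ ^ 2 + ‖φ₂‖ ^ 2) := by
    have h1 := hray₁ _ p.1.2
    have h2 := hray₂ _ p.2.2
    calc (⟪T φ₁, φ₁⟫_ℂ).re + (⟪T φ₂, φ₂⟫_ℂ).re
        ≤ C * ‖φ₁‖ ^ 2 + C * ‖φ₂‖ ^ 2 := add_le_add h1 h2
      _ = C * (‖φ₁‖ ^ 2 + ‖φ₂‖ ^ 2) := by ring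
  have klow₂ := key m₂ hm₂N (φ₁ + φ₂) hc₁
  have klow₁ := key i hiN (φ₁ - φ₂) hc₂
  rw [hadd] at klow₂
  rw [hsub] at klow₁
  rw [hadd] at hφpos
  have hfinal : (lam ⟨i, hiN⟩ + lam ⟨m₂, hm₂N⟩) * (‖φ₁‖ ^ 2 + ‖φ₂‖ ^ 2)
      ≤ 2 * C * (‖φ₁‖ ^ 2 + ‖φ₂‖ ^ 2) := by
    nlinarith [hqsum, hray, klow₁, klow₂]
  have : lam ⟨i, hiN⟩ + lam ⟨m₂, hm₂N⟩ ≤ 2 * C := by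
    have := (mul_le_mul_iff_of_pos_right hφpos).1 hfinal
    linarith
  linarith
end
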